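/- Let π ∈ S_n satisfy π(j) = j for all j > r+1 (where 1 ≤ r < n) and π(r+1) ≠ 1, and let t_r be the cycle (r+1, r, ..., 2, 1). Then maj(t_r ∘ π) = maj(π) + 1. -/

import Mathlib

namespace SymMaj

/-- `sP i` is the adjacent transposition `s_i = (i, i+1)` (1-indexed),
i.e. the swap of the 0-indexed positions `i-1` and `i`; junk value `1` outside range. -/
def sP {n : ℕ} (i : ℕ) : Equiv.Perm (Fin n) :=
  if h : 0 < i ∧ i < n then Equiv.swap ⟨i - 1, by omega⟩ ⟨i, h.2⟩ else 1

/-- `tP i = s_i * s_{i-1} * ⋯ * s_1`; in particular `tP 0 = 1`. -/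
def tP {n : ℕ} (i : ℕ) : Equiv.Perm (Fin n) :=
  ((List.range i).map (fun j => (sP (i - j) : Equiv.Perm (Fin n)))).prod

/-- `repP k = tP (n-1) ^ k (n-1) * ⋯ * tP 1 ^ k 1 * tP 0 ^ k 0`. -/
def repP {n : ℕ} (k : Fin n → ℕ) : Equiv.Perm (Fin n) :=
  (List.ofFn (fun i : Fin n => (tP (i : ℕ) : Equiv.Perm (Fin n)) ^ k i)).reverse.prod

/-- The major index: sum of all 1-indexed `i`, `1 ≤ i < n`, with `π(i) > π(i+1)`. -/
def majP {n : ℕ} (π : Equiv.Perm (Fin n)) : ℕ :=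
  ∑ i ∈ Finset.range n, if h : i + 1 < n then
    (if π ⟨i + 1, h⟩ < π ⟨i, by omega⟩ then i + 1 else 0) else 0

/-! On values, `tP r` sends `0 ↦ r` and `x ↦ x - 1` for `1 ≤ x ≤ r`, fixing the rest: it is
increasing away from `0` and sends `0` above all of `[1, r]`. So `tP r * π` and `π` have the same
descents except next to the position `p` with `π p = 0`. As `π` preserves `[0, r]` and `p < r`,
a descent at `p` (weight `p + 1`) is created and the one at `p - 1` (weight `p`, or nothing if
`p = 0`) disappears. -/

open Equiv Finset

lemma sP_succ_eq_swap {n r : ℕ} (hrn : r + 1 < n) :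
    (sP (r + 1) : Perm (Fin n)) = swap ⟨r, by omega⟩ ⟨r + 1, hrn⟩ :=
  dif_pos ⟨r.succ_pos, hrn⟩

lemma tP_succ {n : ℕ} (r : ℕ) : (tP (r + 1) : Perm (Fin n)) = sP (r + 1) * tP r := by
  simp only [tP, List.range_succ_eq_map, List.map_cons, List.map_map, List.prod_cons,
    Nat.sub_zero]
  congr 3
  funext j
  simp [Nat.succ_sub_succ_eq_sub]

lemma val_tP_apply {n r : ℕ} (hrn : r < n) (x : Fin n) :
    ((tP r x : Fin n) : ℕ) = if (x : ℕ) = 0 then r else if (x : ℕ) ≤ r then x - 1 else x := by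
  induction r with
  | zero =>
    simp only [tP, List.range_zero, List.map_nil, List.prod_nil, Perm.one_apply]
    split_ifs <;> omega
  | succ r ih =>
    rw [tP_succ, Perm.mul_apply, sP_succ_eq_swap hrn, swap_apply_def]
    have ih := ih (by omega)
    split_ifs <;> simp only [Fin.ext_iff] at * <;> split_ifs at ih <;> omega

lemma tP_apply_lt_tP_apply_iff {n r : ℕ} (hrn : r < n) {x y : Fin n} (hx : (x : ℕ) ≠ 0)
    (hy : (y : ℕ) ≠ 0) : tP r x < tP r y ↔ x < y := by
  simp only [Fin.lt_def, val_tP_apply hrn]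
  split_ifs <;> omega

lemma tP_apply_lt_tP_apply_of_val_eq_zero {n r : ℕ} (hrn : r < n) {x z : Fin n}
    (hx : (x : ℕ) ≠ 0) (hxr : (x : ℕ) ≤ r) (hz : (z : ℕ) = 0) : tP r x < tP r z := by
  simp only [Fin.lt_def, val_tP_apply hrn]
  split_ifs <;> omega

lemma val_apply_le_of_fixes_gt {n r : ℕ} {π : Perm (Fin n)}
    (hfix : ∀ j : Fin n, r + 1 ≤ (j : ℕ) → π j = j) {x : Fin n} (hx : (x : ℕ) ≤ r) :
    (π x : ℕ) ≤ r := by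
  by_contra! h
  have : π x = x := π.injective (hfix (π x) h)
  rw [this] at h
  omega

lemma val_apply_eq_zero_iff {n : ℕ} {π : Perm (Fin n)} {p : Fin n} (hp : (π p : ℕ) = 0)
    {x : Fin n} : (π x : ℕ) = 0 ↔ x = p := by
  rw [← hp, ← Fin.ext_iff, π.apply_eq_iff_eq]

def descentWeight {n : ℕ} (π : Perm (Fin n)) (i : ℕ) : ℕ :=
  if h : i + 1 < n then (if π ⟨i + 1, h⟩ < π ⟨i, by omega⟩ then i + 1 else 0) else 0

lemma majP_eq_sum_descentWeight {n : ℕ} (π : Perm (Fin n)) :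
    majP π = ∑ i ∈ range n, descentWeight π i :=
  rfl

lemma descentWeight_tP_mul {n r : ℕ} (hrn : r < n) {π : Perm (Fin n)}
    (hle : ∀ x : Fin n, (x : ℕ) ≤ r → (π x : ℕ) ≤ r) {p : Fin n} (hp : (π p : ℕ) = 0)
    (hpr : (p : ℕ) < r) (i : ℕ) :
    descentWeight (tP r * π) i + (if i + 1 = (p : ℕ) then (p : ℕ) else 0) =
      descentWeight π i + (if i = (p : ℕ) then (p : ℕ) + 1 else 0) := by
  by_cases hi : i + 1 < n
  swap
  · simp only [descentWeight, dif_neg hi]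
    split_ifs <;> omega
  simp only [descentWeight, dif_pos hi, Perm.mul_apply]
  set x : Fin n := ⟨i, by omega⟩
  set y : Fin n := ⟨i + 1, hi⟩
  have hx0 : (π x : ℕ) = 0 ↔ i = p := by rw [val_apply_eq_zero_iff hp, Fin.ext_iff]
  have hy0 : (π y : ℕ) = 0 ↔ i + 1 = p := by rw [val_apply_eq_zero_iff hp, Fin.ext_iff]
  by_cases hip : i = p
  · have hy : (π y : ℕ) ≠ 0 := by omega
    have hyr : (π y : ℕ) ≤ r := hle y (by simp [y]; omega)
    have hσ : tP r (π y) < tP r (π x) :=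
      tP_apply_lt_tP_apply_of_val_eq_zero hrn hy hyr (hx0.2 hip)
    have hπ : ¬ π y < π x := by simp [Fin.lt_def, hx0.2 hip]
    simp only [hσ, hπ, hip, Nat.succ_ne_self, if_true, if_false]
    omega
  by_cases hip1 : i + 1 = p
  · have hx : (π x : ℕ) ≠ 0 := by omega
    have hxr : (π x : ℕ) ≤ r := hle x (by simp [x]; omega)
    have hσ : ¬ tP r (π y) < tP r (π x) :=
      not_lt.2 (tP_apply_lt_tP_apply_of_val_eq_zero hrn hx hxr (hy0.2 hip1)).le
    have hπ : π y < π x := by simp [Fin.lt_def, hy0.2 hip1]; omega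
    simp only [hσ, hπ, hip, hip1, if_true, if_false]
    omega
  simp only [tP_apply_lt_tP_apply_iff hrn (mt hy0.1 hip1) (mt hx0.1 hip), hip, hip1, if_false]

lemma sum_range_ite_succ_eq_self {n p : ℕ} (hp : p ≤ n) :
    ∑ i ∈ range n, (if i + 1 = p then p else 0) = p := by
  cases p with
  | zero => simp
  | succ p => simp [sum_ite_eq', Nat.lt_of_succ_le hp]

lemma majP_tP_mul_add {n r : ℕ} (hrn : r < n) {π : Perm (Fin n)}
    (hle : ∀ x : Fin n, (x : ℕ) ≤ r → (π x : ℕ) ≤ r) {p : Fin n} (hp : (π p : ℕ) = 0)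
    (hpr : (p : ℕ) < r) : majP (tP r * π) + p = majP π + (p + 1) := by
  have key := sum_congr rfl fun i (_ : i ∈ range n) => descentWeight_tP_mul hrn hle hp hpr i
  rwa [sum_add_distrib, sum_add_distrib, sum_range_ite_succ_eq_self (by omega), sum_ite_eq',
    if_pos (mem_range.2 (by omega)), ← majP_eq_sum_descentWeight,
    ← majP_eq_sum_descentWeight] at key

/-- if `π(j) = j` for all (1-indexed) `j > r+1` and `π(r+1) ≠ 1`,
then `maj(t_r ∘ π) = maj(π) + 1`. -/
theorem majP_cycle_mul (n r : ℕ) (hrn : r < n) (π : Equiv.Perm (Fin n))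
    (hfix : ∀ j : Fin n, r + 1 ≤ (j : ℕ) → π j = j)
    (hne : π ⟨r, hrn⟩ ≠ ⟨0, by omega⟩) :
    majP (tP r * π) = majP π + 1 := by
  set p := π⁻¹ ⟨0, by omega⟩
  have hp : (π p : ℕ) = 0 := by simp [p]
  have hpr : (p : ℕ) < r := by
    have hp_le : (p : ℕ) ≤ r := by
      by_contra! h
      rw [hfix p h] at hp
      omega
    have hp_ne : (p : ℕ) ≠ r := fun h => hne <| by
      rw [show (⟨r, hrn⟩ : Fin n) = p from Fin.ext h.symm]
      exact Fin.ext hp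
    omega
  have hmaj := majP_tP_mul_add hrn (fun _ => val_apply_le_of_fixes_gt hfix) hp hpr
  omega

end SymMaj
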